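/- arXiv:2004.07996 — 3 statements merged into one kernel-verified Lean document; each statement's English description precedes it below -/
import Mathlib

section
/- Let n ≥ 2, let p : Fin n → ℝ² be in counterclockwise convex position, and let σ : Fin n → Fin n be a bijection whose spanning path на p is noncrossing. Let I = (i, i+1, …, i+t−1) (indices modulo n) be a cyclic arc such that neither the first label σ 0 nor the last label σ (n−1) of the path belongs to I. Then the labels of I appear along the path in the same order as along I or in the exactly reversed order; that is, either σ⁻¹(i) < σ⁻¹(i+1) < … < σ⁻¹(i+t−1) or σ⁻¹(i) > σ⁻¹(i+1) > … > σ⁻¹(i+t−1). -/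
/-- Signed area determinant of two vectors in the plane. -/
def det2 (u v : ℝ × ℝ) : ℝ := u.1 * v.2 - u.2 * v.1

/-- `p` lists points in counterclockwise convex position. -/
def CCWConvex {n : ℕ} (p : Fin n → ℝ × ℝ) : Prop :=
  ∀ i j k : Fin n, i < j → j < k → 0 < det2 (p j - p i) (p k - p i)

/-- The path visiting `f 0, f 1, …` is noncrossing: consecutive edges meet exactly at
their shared vertex, and nonconsecutive edges are disjoint. -/
def NoncrossingPath {m : ℕ} (f : Fin m → ℝ × ℝ) : Prop :=
  ∀ k l : ℕ, ∀ hk : k + 1 < m, ∀ hl : l + 1 < m, k < l →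
    if l = k + 1 then
      segment ℝ (f ⟨k, by omega⟩) (f ⟨k + 1, hk⟩) ∩
        segment ℝ (f ⟨l, by omega⟩) (f ⟨l + 1, hl⟩) = {f ⟨k + 1, hk⟩}
    else
      Disjoint (segment ℝ (f ⟨k, by omega⟩) (f ⟨k + 1, hk⟩))
        (segment ℝ (f ⟨l, by omega⟩) (f ⟨l + 1, hl⟩))

/-- `A` is a cyclic arc of `Fin n`: a set of the form `{i, i+1, …, i+t-1}` (mod `n`). -/
def IsArc {n : ℕ} (A : Set (Fin n)) : Prop :=
  ∃ i t : ℕ, t ≤ n ∧ ∀ x : Fin n, x ∈ A ↔ ∃ r < t, (x : ℕ) = (i + r) % n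

/-- The point of `Fin n` with value `i` modulo `n`. -/
def arcPt (n : ℕ) (hn : 0 < n) (i : ℕ) : Fin n := ⟨i % n, Nat.mod_lt _ hn⟩

/-!
Measure every label by its counterclockwise offset `x - σ 0` from the first vertex of the path.
For points in convex position two chords cross as soon as their endpoints interleave along the
hull. Hence the path can never step from the arc of the labels visited so far to a point that is
not a neighbour of that arc: the unvisited points on both sides of the new label would have to be
joined later by an edge crossing the last one. So every prefix `σ 0, …, σ m` is a cyclic arc
around `σ 0`, of offsets `[n - c, n) ∪ [0, a]`, and as long as it does not contain the last vertex
`σ (n - 1)`, of offset `Δ`, we have `a < Δ < n - c`. Thus labels with offset in `(0, Δ)` are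
visited in increasing and those with offset in `(Δ, n)` in decreasing order of offset, and an arc
avoiding `σ 0` and `σ (n - 1)` lies within one of these two ranges.
-/

open Equiv

lemma det2_sub_rotate (u v w : ℝ × ℝ) : det2 (v - u) (w - u) = det2 (w - v) (u - v) := by
  simp only [det2, Prod.fst_sub, Prod.snd_sub]; ring

lemma not_disjoint_segment_of_det2_pos {a b c d : ℝ × ℝ}
    (habc : 0 < det2 (b - a) (c - a)) (hacd : 0 < det2 (c - a) (d - a))
    (habd : 0 < det2 (b - a) (d - a)) (hbcd : 0 < det2 (c - b) (d - b)) :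
    ¬Disjoint (segment ℝ a c) (segment ℝ b d) := by
  set S := det2 (b - a) (c - a) + det2 (c - a) (d - a)
  have hS : S = det2 (b - a) (d - a) + det2 (c - b) (d - b) := by
    simp only [S, det2, Prod.fst_sub, Prod.snd_sub]; ring
  have hS0 : 0 < S := by positivity
  rw [Set.not_disjoint_iff, segment_eq_image', segment_eq_image']
  -- the diagonals divide each other in the ratios of the areas of the triangles they cut off
  refine ⟨a + (det2 (b - a) (d - a) / S) • (c - a),
    ⟨_, ⟨by positivity, (div_le_one hS0).2 (by linarith)⟩, rfl⟩,
    ⟨det2 (b - a) (c - a) / S, ⟨by positivity, (div_le_one hS0).2 (by linarith)⟩, ?_⟩⟩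
  have hS' : S ≠ 0 := hS0.ne'
  ext <;> simp only [Prod.fst_add, Prod.snd_add, Prod.smul_fst, Prod.smul_snd, Prod.fst_sub,
    Prod.snd_sub, smul_eq_mul] <;> field_simp <;> simp only [S, det2, Prod.fst_sub, Prod.snd_sub]
    <;> ring

lemma Nat.exists_ne_succ_of_ne {β : Type*} (f : ℕ → β) {a b : ℕ} (h : f a ≠ f b) :
    ∃ k, min a b ≤ k ∧ k < max a b ∧ f k ≠ f (k + 1) := by
  wlog hab : a ≤ b generalizing a b
  · simpa [min_comm, max_comm] using this h.symm (by omega)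
  rw [min_eq_left hab, max_eq_right hab]
  induction b, hab using Nat.le_induction with
  | base => exact absurd rfl h
  | succ b hab ih =>
    by_cases hb : f a = f b
    · exact ⟨b, hab, b.lt_succ_self, hb ▸ h⟩
    · obtain ⟨k, hak, hkb, hk⟩ := ih hb
      exact ⟨k, hak, hkb.trans b.lt_succ_self, hk⟩

section ArcPt

variable {n : ℕ}

lemma Fin.val_sub_eq_or (x b : Fin n) :
    b ≤ x ∧ ((x - b : Fin n) : ℕ) = x - b ∨ x < b ∧ ((x - b : Fin n) : ℕ) = n + x - b := by
  rcases le_or_gt b x with h | h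
  · exact .inl ⟨h, Fin.coe_sub_iff_le.2 h⟩
  · exact .inr ⟨h, Fin.coe_sub_iff_lt.2 h⟩

lemma arcPt_of_lt (hn : 0 < n) {k : ℕ} (hk : k < n) : arcPt n hn k = ⟨k, hk⟩ :=
  Fin.ext (Nat.mod_eq_of_lt hk)

lemma arcPt_add_arcPt (hn : 0 < n) (i r : ℕ) :
    arcPt n hn (arcPt n hn i + r) = arcPt n hn (i + r) :=
  Fin.ext (Nat.mod_add_mod i n r)

lemma arcPt_add_sub (hn : 0 < n) (b x : Fin n) : arcPt n hn (b + (x - b : Fin n)) = x := by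
  ext
  simp only [arcPt, Fin.val_sub, Nat.add_mod_mod]
  rw [← Nat.add_assoc, Nat.add_sub_cancel' b.isLt.le, Nat.add_mod_left, Nat.mod_eq_of_lt x.isLt]

lemma arcPt_add_sub_self (hn : 0 < n) {b : Fin n} {r : ℕ} (hr : r < n) :
    ((arcPt n hn (b + r) - b : Fin n) : ℕ) = r := by
  simp only [arcPt, Fin.val_sub, Nat.add_mod_mod]
  rw [← Nat.add_assoc, Nat.sub_add_cancel b.isLt.le, Nat.add_mod_left, Nat.mod_eq_of_lt hr]

lemma arcPt_add_sub_of_ne (hn : 0 < n) {b : Fin n} {i t : ℕ}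
    (h : ∀ r < t, b ≠ arcPt n hn (i + r)) {r : ℕ} (hr : r < t) :
    ((arcPt n hn (i + r) - b : Fin n) : ℕ) = ((arcPt n hn i - b : Fin n) : ℕ) + r := by
  set d := ((arcPt n hn i - b : Fin n) : ℕ)
  have key (r : ℕ) : arcPt n hn (i + r) = arcPt n hn (b + (d + r)) := by
    rw [← arcPt_add_arcPt hn i, ← Nat.add_assoc, ← arcPt_add_arcPt hn (b + _), arcPt_add_sub]
  by_cases hdr : d + r < n
  · rw [key, arcPt_add_sub_self hn hdr]
  · refine absurd ?_ (h (n - d) (by omega))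
    rw [key, Nat.add_sub_cancel' (arcPt n hn i - b).isLt.le]
    exact Fin.ext (by simp [arcPt, Nat.mod_eq_of_lt b.isLt])

end ArcPt

section ConvexPosition

variable {n : ℕ} {p : Fin n → ℝ × ℝ}

attribute [local instance] LT.toSBtw

lemma sbtw_of_sub_lt_sub {b x y z : Fin n} (hxy : x - b < y - b) (hyz : y - b < z - b) :
    sbtw x y z := by
  rcases Fin.val_sub_eq_or x b with ⟨hx, hx'⟩ | ⟨hx, hx'⟩ <;>
  rcases Fin.val_sub_eq_or y b with ⟨hy, hy'⟩ | ⟨hy, hy'⟩ <;>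
  rcases Fin.val_sub_eq_or z b with ⟨hz, hz'⟩ | ⟨hz, hz'⟩ <;>
  simp only [sbtw_iff, Fin.le_def, Fin.lt_def] at * <;> omega

lemma CCWConvex.det2_pos_of_sbtw (hp : CCWConvex p) {x y z : Fin n} (h : sbtw x y z) :
    0 < det2 (p y - p x) (p z - p x) := by
  rcases sbtw_iff.1 h with ⟨hxy, hyz⟩ | ⟨hyz, hzx⟩ | ⟨hzx, hxy⟩
  · exact hp x y z hxy hyz
  · rw [det2_sub_rotate]; exact hp y z x hyz hzx
  · rw [← det2_sub_rotate]; exact hp z x y hzx hxy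

lemma CCWConvex.not_disjoint_segment (hp : CCWConvex p) {b w x y z : Fin n}
    (hwx : w - b < x - b) (hxy : x - b < y - b) (hyz : y - b < z - b) :
    ¬Disjoint (segment ℝ (p w) (p y)) (segment ℝ (p x) (p z)) :=
  not_disjoint_segment_of_det2_pos (hp.det2_pos_of_sbtw (sbtw_of_sub_lt_sub hwx hxy))
    (hp.det2_pos_of_sbtw (sbtw_of_sub_lt_sub (hwx.trans hxy) hyz))
    (hp.det2_pos_of_sbtw (sbtw_of_sub_lt_sub hwx (hxy.trans hyz)))
    (hp.det2_pos_of_sbtw (sbtw_of_sub_lt_sub hxy hyz))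

lemma CCWConvex.not_disjoint_segment_of_separated (hp : CCWConvex p) {b u v x z : Fin n}
    (hxv : x - b < v - b) (hvz : v - b < z - b) (hu : u - b < x - b ∨ z - b < u - b) :
    ¬Disjoint (segment ℝ (p u) (p v)) (segment ℝ (p x) (p z)) := by
  rcases hu with hu | hu
  · exact hp.not_disjoint_segment hu hxv hvz
  · rw [disjoint_comm, segment_symm ℝ (p u)]
    exact hp.not_disjoint_segment hxv hvz hu

end ConvexPosition

lemma NoncrossingPath.disjoint {m : ℕ} {f : Fin m → ℝ × ℝ} (hf : NoncrossingPath f) {k l : ℕ}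
    (hkl : k + 1 < l) (hl : l + 1 < m) :
    Disjoint (segment ℝ (f ⟨k, by omega⟩) (f ⟨k + 1, by omega⟩))
      (segment ℝ (f ⟨l, by omega⟩) (f ⟨l + 1, hl⟩)) := by
  have h := hf k l (by omega) hl (by omega)
  rwa [if_neg (by omega)] at h

/-- `σ 0, …, σ m` are exactly the labels of the cyclic arc from `b - c` to `b + a`. -/
def PrefixIsArc {n : ℕ} (σ : Perm (Fin n)) (b : Fin n) (m a c : ℕ) : Prop :=
  ∀ j : Fin n, (j : ℕ) ≤ m ↔ ((σ j - b : Fin n) : ℕ) ≤ a ∨ n ≤ ((σ j - b : Fin n) : ℕ) + c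

namespace PrefixIsArc

variable {n : ℕ} {σ : Perm (Fin n)} {b : Fin n} {m a c : ℕ}

lemma succ_lt_iff [NeZero n] (hpre : PrefixIsArc σ b m a c) (hm : m + 1 < n) (j : Fin n) :
    m + 1 < (j : ℕ) ↔ a < ((σ j - b : Fin n) : ℕ) ∧ ((σ j - b : Fin n) : ℕ) + c < n ∧
      ((σ j - b : Fin n) : ℕ) ≠ ((σ ⟨m + 1, hm⟩ - b : Fin n) : ℕ) := by
  rw [Ne, Fin.val_inj, sub_left_inj, σ.injective.eq_iff, Fin.ext_iff]
  have := hpre j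
  simp only
  omega

theorem next_adjacent (hn : 0 < n) {p : Fin n → ℝ × ℝ} (hp : CCWConvex p)
    (hσ : NoncrossingPath (p ∘ σ)) (hpre : PrefixIsArc σ b m a c) (hm : m + 1 < n) :
    ((σ ⟨m + 1, hm⟩ - b : Fin n) : ℕ) ≤ a + 1 ∨
      n ≤ ((σ ⟨m + 1, hm⟩ - b : Fin n) : ℕ) + c + 1 := by
  have : NeZero n := ⟨hn.ne'⟩
  set e := ((σ ⟨m + 1, hm⟩ - b : Fin n) : ℕ)
  by_contra! he
  -- the two neighbours of the arc lie on opposite sides of `σ (m + 1)` and are visited later,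
  -- so some later edge `σ k σ (k + 1)` crosses from one side to the other
  set side : ℕ → Bool := fun k => decide (((σ (arcPt n hn k) - b : Fin n) : ℕ) < e)
  have hlater (r : ℕ) (hra : a < r) (hrc : r + c < n) (hre : r ≠ e) :
      ∃ t < n, m + 1 < t ∧ side t = decide (r < e) := by
    have hr := arcPt_add_sub_self hn (b := b) (show r < n by omega)
    refine ⟨σ.symm (arcPt n hn (b + r)), Fin.isLt _, (hpre.succ_lt_iff hm _).2 ?_, ?_⟩
    · simp only [σ.apply_symm_apply, hr]; omega
    · simp only [side, arcPt_of_lt hn (σ.symm _).isLt, σ.apply_symm_apply, hr]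
  obtain ⟨t₁, ht₁n, ht₁, hs₁⟩ := hlater (a + 1) (by omega) (by omega) (by omega)
  obtain ⟨t₂, ht₂n, ht₂, hs₂⟩ := hlater (n - c - 1) (by omega) (by omega) (by omega)
  obtain ⟨k, hk₁, hkt, hk⟩ := Nat.exists_ne_succ_of_ne side (a := t₁) (b := t₂)
    (by rw [hs₁, hs₂, ne_eq, decide_eq_decide]; omega)
  have hk₂ : k + 1 < n := by omega
  obtain ⟨hka, hkc, hke⟩ := (hpre.succ_lt_iff hm ⟨k, by omega⟩).1 (by simp only; omega)
  obtain ⟨hk'a, hk'c, hk'e⟩ := (hpre.succ_lt_iff hm ⟨k + 1, hk₂⟩).1 (by simp only; omega)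
  simp only [side, arcPt_of_lt hn (show k < n by omega), arcPt_of_lt hn hk₂, ne_eq,
    decide_eq_decide] at hk
  have hu := (hpre ⟨m, by omega⟩).1 le_rfl
  have hdisj := hσ.disjoint (k := m) (l := k) (by omega) hk₂
  simp only [Function.comp_apply] at hdisj
  rcases lt_or_gt_of_ne hke with hlt | hgt
  · exact hp.not_disjoint_segment_of_separated (b := b) (Fin.lt_def.2 hlt)
      (Fin.lt_def.2 (by omega)) (by simp only [Fin.lt_def]; omega) hdisj
  · rw [segment_symm ℝ (p (σ ⟨k, _⟩))] at hdisj
    exact hp.not_disjoint_segment_of_separated (b := b) (Fin.lt_def.2 (by omega))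
      (Fin.lt_def.2 hgt) (by simp only [Fin.lt_def]; omega) hdisj

lemma last_mem_gap (hpre : PrefixIsArc σ b m a c) (hm : m < n - 1) :
    a < ((σ ⟨n - 1, by omega⟩ - b : Fin n) : ℕ) ∧
      ((σ ⟨n - 1, by omega⟩ - b : Fin n) : ℕ) + c < n := by
  have := hpre ⟨n - 1, by omega⟩
  simp only at this
  omega

end PrefixIsArc

theorem NoncrossingPath.prefixIsArc {n : ℕ} (hn : 0 < n) {p : Fin n → ℝ × ℝ} (hp : CCWConvex p)
    {σ : Perm (Fin n)} (hσ : NoncrossingPath (p ∘ σ)) {m : ℕ} (hm : m < n) :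
    ∃ a c, PrefixIsArc σ (σ ⟨0, hn⟩) m a c := by
  have : NeZero n := ⟨hn.ne'⟩
  induction m with
  | zero =>
    refine ⟨0, 0, fun j => ?_⟩
    have h0 : ((σ j - σ ⟨0, hn⟩ : Fin n) : ℕ) = 0 ↔ (j : ℕ) = 0 := by
      rw [Fin.val_eq_zero_iff, sub_eq_zero, σ.injective.eq_iff, Fin.ext_iff]
    have := (σ j - σ ⟨0, hn⟩).isLt
    omega
  | succ m ih =>
    obtain ⟨a, c, hpre⟩ := ih (by omega)
    have hstep (j : Fin n) : (j : ℕ) ≤ m + 1 ↔ (((σ j - σ ⟨0, hn⟩ : Fin n) : ℕ) ≤ a ∨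
        n ≤ ((σ j - σ ⟨0, hn⟩ : Fin n) : ℕ) + c) ∨
        ((σ j - σ ⟨0, hn⟩ : Fin n) : ℕ) = ((σ ⟨m + 1, hm⟩ - σ ⟨0, hn⟩ : Fin n) : ℕ) := by
      rw [← hpre j, Fin.val_inj, sub_left_inj, σ.injective.eq_iff, Fin.ext_iff]
      simp only
      omega
    have hnew := (hpre ⟨m + 1, hm⟩).not.1 (by simp only; omega)
    rcases hpre.next_adjacent hn hp hσ hm with hl | hr
    · exact ⟨a + 1, c, fun j => (hstep j).trans (by omega)⟩
    · exact ⟨a, c + 1, fun j => (hstep j).trans (by omega)⟩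

section Order

variable {n : ℕ} {σ : Perm (Fin n)} {b : Fin n}

lemma symm_lt_pred_of_ne_last (hn : 0 < n) {x : Fin n} (hx : x ≠ σ ⟨n - 1, by omega⟩) :
    (σ.symm x : ℕ) < n - 1 := by
  have := (σ.symm x).isLt
  have : (σ.symm x : ℕ) ≠ n - 1 := fun h => hx (σ.symm_apply_eq.1 (Fin.ext h))
  omega

lemma symm_lt_symm_of_sub_lt_of_lt_last (hn : 0 < n) (hpre : ∀ m < n, ∃ a c, PrefixIsArc σ b m a c)
    {x y : Fin n} (hxy : ((x - b : Fin n) : ℕ) < ((y - b : Fin n) : ℕ))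
    (hy : ((y - b : Fin n) : ℕ) < ((σ ⟨n - 1, by omega⟩ - b : Fin n) : ℕ)) :
    σ.symm x < σ.symm y := by
  obtain ⟨a, c, h⟩ := hpre (σ.symm y) (σ.symm y).isLt
  have hgap := h.last_mem_gap (symm_lt_pred_of_ne_last hn fun h => by simp [h] at hy)
  have hx := h (σ.symm x)
  have hy' := h (σ.symm y)
  simp only [σ.apply_symm_apply] at hx hy'
  have := Fin.val_ne_of_ne (σ.symm.injective.ne (a₁ := x) (a₂ := y) (by rintro rfl; omega))
  rw [Fin.lt_def]
  omega

lemma symm_lt_symm_of_last_lt_of_sub_lt (hn : 0 < n) (hpre : ∀ m < n, ∃ a c, PrefixIsArc σ b m a c)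
    {x y : Fin n} (hx : ((σ ⟨n - 1, by omega⟩ - b : Fin n) : ℕ) < ((x - b : Fin n) : ℕ))
    (hxy : ((x - b : Fin n) : ℕ) < ((y - b : Fin n) : ℕ)) :
    σ.symm y < σ.symm x := by
  obtain ⟨a, c, h⟩ := hpre (σ.symm x) (σ.symm x).isLt
  have hgap := h.last_mem_gap (symm_lt_pred_of_ne_last hn fun h => by simp [h] at hx)
  have hx' := h (σ.symm x)
  have hy := h (σ.symm y)
  simp only [σ.apply_symm_apply] at hx' hy
  have := Fin.val_ne_of_ne (σ.symm.injective.ne (a₁ := x) (a₂ := y) (by rintro rfl; omega))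
  rw [Fin.lt_def]
  omega

end Order

theorem arc_labels_in_path_order {n : ℕ} (hn : 2 ≤ n)
    (p : Fin n → ℝ × ℝ) (hp : CCWConvex p)
    (σ : Equiv.Perm (Fin n)) (hσ : NoncrossingPath (p ∘ σ))
    (i t : ℕ)
    (hfirst : ∀ r < t, σ ⟨0, by omega⟩ ≠ arcPt n (by omega) (i + r))
    (hlast : ∀ r < t, σ ⟨n - 1, by omega⟩ ≠ arcPt n (by omega) (i + r)) :
    (∀ a b : ℕ, a < b → b < t →
        σ.symm (arcPt n (by omega) (i + a)) < σ.symm (arcPt n (by omega) (i + b))) ∨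
    (∀ a b : ℕ, a < b → b < t →
        σ.symm (arcPt n (by omega) (i + b)) < σ.symm (arcPt n (by omega) (i + a))) := by
  have hn0 : 0 < n := by omega
  have : NeZero n := ⟨hn0.ne'⟩
  have hpre (m : ℕ) (hm : m < n) := hσ.prefixIsArc hn0 hp hm
  have harc (r : ℕ) (hr : r < t) := arcPt_add_sub_of_ne hn0 hfirst hr
  set d := ((arcPt n hn0 i - σ ⟨0, hn0⟩ : Fin n) : ℕ)
  set Δ := ((σ ⟨n - 1, by omega⟩ - σ ⟨0, hn0⟩ : Fin n) : ℕ)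
  have hΔ (r : ℕ) (hr : r < t) : d + r ≠ Δ := by
    rw [← harc r hr, Ne, Fin.val_inj, sub_left_inj]
    exact (hlast r hr).symm
  by_cases hd : d < Δ
  · left
    intro a b hab hb
    have : d + b < Δ := by
      by_contra!
      exact hΔ (Δ - d) (by omega) (by omega)
    exact symm_lt_symm_of_sub_lt_of_lt_last hn0 hpre (by rw [harc a (by omega), harc b hb]; omega)
      (by rw [harc b hb]; omega)
  · right
    intro a b hab hb
    have : Δ < d + a := lt_of_le_of_ne (by omega) (hΔ a (by omega)).symm
    exact symm_lt_symm_of_last_lt_of_sub_lt hn0 hpre (by rw [harc a (by omega)]; omega)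
      (by rw [harc a (by omega), harc b hb]; omega)
end

section
/- Let p : Fin 5 → ℝ² be in counterclockwise convex position, and let q : Fin 5 → ℝ² be such that q ∘ ρ is in counterclockwise convex position, where ρ : Fin 5 → Fin 5 is the bijection with ρ(0)=0, ρ(1)=2, ρ(2)=4, ρ(3)=1, ρ(4)=3 (i.e., with 1-based labels the points of q appear counterclockwise along their convex hull in the order q₁, q₃, q₅, q₂, q₄). Then p and q do not admit compatible paths: there is no bijection σ : Fin 5 → Fin 5 whose spanning path is noncrossing on p and also noncrossing on q. -/
/-!
Interleaving chords of a convex polygon cross: for `a < c < b < d`, the orientation signs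
supplied by convex position say that each of the chords `[a, b]` and `[c, d]` separates the
endpoints of the other. So a spanning path that is noncrossing on points in convex position
never uses two nonconsecutive edges whose labels interleave, a condition on the labels alone.
Labelling by position along the hull of `p`, the hull order of `q` is the pentagram order
`0, 2, 4, 1, 3`, and a check of all `5!` vertex orders shows that no path avoids interleaving
nonconsecutive edges for both cyclic orders.
-/

lemma det2_comm (u v : ℝ × ℝ) : det2 u v = -det2 v u := by
  simp only [det2]; ring

lemma det2_sub_rotate_s2 (a b c : ℝ × ℝ) : det2 (b - a) (c - a) = det2 (c - b) (a - b) := by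
  simp only [det2, Prod.fst_sub, Prod.snd_sub]; ring

lemma not_disjoint_segment_of_det2 {a b c d : ℝ × ℝ}
    (hc : det2 (b - a) (c - a) < 0) (hd : 0 < det2 (b - a) (d - a))
    (ha : 0 < det2 (d - c) (a - c)) (hb : det2 (d - c) (b - c) < 0) :
    ¬ Disjoint (segment ℝ a b) (segment ℝ c d) := by
  set t := det2 (d - c) (a - c) / (det2 (d - c) (a - c) - det2 (d - c) (b - c))
  set s := det2 (b - a) (c - a) / (det2 (b - a) (c - a) - det2 (b - a) (d - a))
  have ht : t ∈ Set.Icc (0 : ℝ) 1 :=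
    ⟨div_nonneg ha.le (by linarith), (div_le_one (by linarith)).2 (by linarith)⟩
  have hs : s ∈ Set.Icc (0 : ℝ) 1 :=
    ⟨div_nonneg_of_nonpos hc.le (by linarith), (div_le_one_of_neg (by linarith)).2 (by linarith)⟩
  -- `t` and `s` are ratios of signed distances from the other line, so both sides are the
  -- intersection point of the two lines
  have hmeet : a + t • (b - a) = c + s • (d - c) := by
    have h1 : det2 (d - c) (a - c) - det2 (d - c) (b - c) ≠ 0 := by linarith
    have h2 : det2 (b - a) (c - a) - det2 (b - a) (d - a) ≠ 0 := by linarith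
    simp only [t, s, det2] at h1 h2 ⊢
    ext <;> simp only [Prod.fst_add, Prod.snd_add, Prod.smul_fst, Prod.smul_snd,
      Prod.fst_sub, Prod.snd_sub, smul_eq_mul] at h1 h2 ⊢ <;> field_simp <;> ring
  rw [Set.not_disjoint_iff]
  refine ⟨a + t • (b - a), ?_, ?_⟩
  · rw [segment_eq_image']; exact ⟨t, ht, rfl⟩
  · rw [segment_eq_image', hmeet]; exact ⟨s, hs, rfl⟩

lemma CCWConvex.not_disjoint_segment_s2 {n : ℕ} {p : Fin n → ℝ × ℝ} (hp : CCWConvex p)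
    {a b c d : Fin n} (hac : a < c) (hcb : c < b) (hbd : b < d) :
    ¬ Disjoint (segment ℝ (p a) (p b)) (segment ℝ (p c) (p d)) := by
  have hacb := hp a c b hac hcb
  have hacd := hp a c d hac (hcb.trans hbd)
  have habd := hp a b d (hac.trans hcb) hbd
  have hcbd := hp c b d hcb hbd
  rw [det2_sub_rotate_s2] at hacd
  refine not_disjoint_segment_of_det2 ?_ habd hacd ?_ <;> rw [det2_comm] <;> linarith

def ChordsCross {n : ℕ} (a b c d : Fin n) : Prop :=
  min a b < min c d ∧ min c d < max a b ∧ max a b < max c d ∨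
  min c d < min a b ∧ min a b < max c d ∧ max c d < max a b

instance {n : ℕ} (a b c d : Fin n) : Decidable (ChordsCross a b c d) := by
  unfold ChordsCross; infer_instance

lemma CCWConvex.not_disjoint_of_chordsCross {n : ℕ} {p : Fin n → ℝ × ℝ} (hp : CCWConvex p)
    {a b c d : Fin n} (h : ChordsCross a b c d) :
    ¬ Disjoint (segment ℝ (p a) (p b)) (segment ℝ (p c) (p d)) := by
  have segment_min_max : ∀ x y : Fin n,
      segment ℝ (p x) (p y) = segment ℝ (p (min x y)) (p (max x y)) := by
    intro x y
    rcases le_total x y with hxy | hxy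
    · rw [min_eq_left hxy, max_eq_right hxy]
    · rw [min_eq_right hxy, max_eq_left hxy, segment_symm]
  rw [segment_min_max a b, segment_min_max c d]
  rcases h with ⟨h₁, h₂, h₃⟩ | ⟨h₁, h₂, h₃⟩
  · exact hp.not_disjoint_segment_s2 h₁ h₂ h₃
  · exact fun hd => hp.not_disjoint_segment_s2 h₁ h₂ h₃ hd.symm

lemma NoncrossingPath.disjoint_segment {m : ℕ} {f : Fin (m + 1) → ℝ × ℝ}
    (hf : NoncrossingPath f) {k l : Fin m} (hkl : k.val + 1 < l.val) :
    Disjoint (segment ℝ (f k.castSucc) (f k.succ)) (segment ℝ (f l.castSucc) (f l.succ)) := by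
  have h := hf k l (by omega) (by omega) (by omega)
  rwa [if_neg (by omega)] at h

def IsNoncrossingChordPath {m n : ℕ} (f : Fin (m + 1) → Fin n) : Prop :=
  ∀ k l : Fin m, k.val + 1 < l.val →
    ¬ ChordsCross (f k.castSucc) (f k.succ) (f l.castSucc) (f l.succ)

instance {m n : ℕ} (f : Fin (m + 1) → Fin n) : Decidable (IsNoncrossingChordPath f) := by
  unfold IsNoncrossingChordPath; infer_instance

lemma CCWConvex.isNoncrossingChordPath {m n : ℕ} {p : Fin n → ℝ × ℝ} (hp : CCWConvex p)
    {f : Fin (m + 1) → Fin n} (hf : NoncrossingPath (p ∘ f)) : IsNoncrossingChordPath f :=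
  fun _ _ hkl hcross => hp.not_disjoint_of_chordsCross hcross (hf.disjoint_segment hkl)

def pentagramPerm : Equiv.Perm (Fin 5) :=
  ⟨![0, 2, 4, 1, 3], ![0, 3, 1, 4, 2], by decide, by decide⟩

set_option maxRecDepth 100000 in
lemma not_isNoncrossingChordPath_pentagramPerm (σ : Equiv.Perm (Fin 5))
    (hσ : IsNoncrossingChordPath (m := 4) σ) :
    ¬ IsNoncrossingChordPath (m := 4) (pentagramPerm.symm * σ) := by
  revert σ; decide

theorem no_compatible_paths_five_points (p q : Fin 5 → ℝ × ℝ)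
    (hp : CCWConvex p)
    (hq : CCWConvex (q ∘ ![0, 2, 4, 1, 3])) :
    ¬ ∃ σ : Equiv.Perm (Fin 5),
        NoncrossingPath (p ∘ σ) ∧ NoncrossingPath (q ∘ σ) := by
  rintro ⟨σ, hpσ, hqσ⟩
  have hq' : CCWConvex (q ∘ pentagramPerm) := hq
  have hqσ' : NoncrossingPath ((q ∘ pentagramPerm) ∘ (pentagramPerm.symm * σ)) := by
    simpa [Function.comp_def] using hqσ
  exact not_isNoncrossingChordPath_pentagramPerm σ (hp.isNoncrossingChordPath hpσ)
    (hq'.isNoncrossingChordPath hqσ')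
end

section
/- Let n ≥ 4. Let p : Fin n → ℝ² be in counterclockwise convex position, and let q : Fin n → ℝ² be such that q ∘ π is in counterclockwise convex position for some bijection π : Fin n → Fin n. Let T be a tree on vertex set Fin n that is not a star, and suppose the straight-line drawing of T is noncrossing on p and also noncrossing on q. Then there exists a partition Fin n = A ∪ B with 2 ≤ |A| ≤ |B| ≤ n − 2 such that A is a cyclic arc of Fin n and π⁻¹(A) is a cyclic arc of Fin n (equivalently, both A and B are sets of labels consecutive along the convex hull of p and also consecutive along the convex hull of q). -/
/-- The straight-line drawing of `G` on the points `p` is noncrossing: segments of two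
distinct edges intersect in at most the image of a common endpoint. -/
def NoncrossingDrawing {n : ℕ} (G : SimpleGraph (Fin n)) (p : Fin n → ℝ × ℝ) : Prop :=
  ∀ u v w x : Fin n, G.Adj u v → G.Adj w x → s(u, v) ≠ s(w, x) →
    segment ℝ (p u) (p v) ∩ segment ℝ (p w) (p x) ⊆
      p '' (({u, v} : Set (Fin n)) ∩ {w, x})

/-!
Because `T` is not a star, it has an edge `uv` whose endpoints both have further neighbours;
deleting it splits `T` into two components `A ∋ u` and `B ∋ v` with at least two vertices each.
For points in convex position the chords `ac` and `bd` cross whenever `a < b < c < d`, so a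
noncrossing drawing has no such pair of edges. Consequently `A` and `B` cannot interleave along
the order: a walk inside `B` between interleaved vertices leaves the interval spanned by two
vertices of `A` along some edge, and a walk inside `A` joining them must cross that edge. A set
that does not interleave with its complement is an interval or the complement of one, hence a
cyclic arc. The same argument applies to `q`, with the order of the vertices pulled back along `π`.
-/

open SimpleGraph Set

def Interleave {α : Type*} [LT α] (X Y : Set α) : Prop :=
  ∃ a ∈ X, ∃ b ∈ Y, ∃ c ∈ X, ∃ d ∈ Y, a < b ∧ b < c ∧ c < d

def SimpleGraph.NoCrossingChords {V : Type*} [LT V] (G : SimpleGraph V) : Prop :=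
  ∀ ⦃a b c d : V⦄, a < b → b < c → c < d → G.Adj a c → ¬G.Adj b d

theorem segment_inter_nonempty_of_det2_pos {a b c d : ℝ × ℝ}
    (habc : 0 < det2 (b - a) (c - a)) (habd : 0 < det2 (b - a) (d - a))
    (hacd : 0 < det2 (c - a) (d - a)) (hbcd : 0 < det2 (c - b) (d - b)) :
    (segment ℝ a c ∩ segment ℝ b d).Nonempty := by
  -- With `e₁, e₂, e₃, e₄` the four determinants in the order of the hypotheses, the crossing
  -- point is `(e₄ a + e₂ c) / S = (e₃ b + e₁ d) / S`, where `S = e₁ + e₃ = e₂ + e₄`.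
  have hsum : det2 (c - b) (d - b) + det2 (b - a) (d - a) =
      det2 (b - a) (c - a) + det2 (c - a) (d - a) := by
    simp only [det2, Prod.fst_sub, Prod.snd_sub]; ring
  set S := det2 (b - a) (c - a) + det2 (c - a) (d - a)
  have hS : 0 < S := by positivity
  refine ⟨(det2 (c - b) (d - b) / S) • a + (det2 (b - a) (d - a) / S) • c,
    ⟨_, _, by positivity, by positivity, by rw [← add_div, hsum, div_self hS.ne'], rfl⟩,
    det2 (c - a) (d - a) / S, det2 (b - a) (c - a) / S, by positivity, by positivity,
    by rw [← add_div, add_comm, div_self hS.ne'], ?_⟩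
  ext <;> simp only [S, det2, Prod.fst_add, Prod.snd_add, Prod.smul_fst, Prod.smul_snd,
    Prod.fst_sub, Prod.snd_sub, smul_eq_mul] <;> field_simp <;> ring

theorem noCrossingChords_of_noncrossingDrawing {n : ℕ} {G : SimpleGraph (Fin n)}
    {p : Fin n → ℝ × ℝ} (hp : CCWConvex p) (hd : NoncrossingDrawing G p) :
    G.NoCrossingChords := by
  intro a b c d hab hbc hcd hac hbd
  obtain ⟨z, hz⟩ := segment_inter_nonempty_of_det2_pos (hp a b c hab hbc)
    (hp a b d hab (hbc.trans hcd)) (hp a c d (hab.trans hbc) hcd) (hp b c d hbc hcd)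
  have hne : s(a, c) ≠ s(b, d) := by
    rw [ne_eq, Sym2.eq_iff]; rintro (⟨rfl, -⟩ | ⟨rfl, -⟩) <;> order
  obtain ⟨w, ⟨hwac, hwbd⟩, -⟩ := hd a c b d hac hbd hne hz
  simp only [mem_insert_iff, mem_singleton_iff] at hwac hwbd
  rcases hwac with rfl | rfl <;> rcases hwbd with h | h <;> order

theorem NoncrossingDrawing.comap {m n : ℕ} {G : SimpleGraph (Fin n)} {q : Fin n → ℝ × ℝ}
    {f : Fin m → Fin n} (hf : f.Injective) (hd : NoncrossingDrawing G q) :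
    NoncrossingDrawing (G.comap f) (q ∘ f) := by
  intro a b c d hab hcd hne
  have hne' : s(f a, f b) ≠ s(f c, f d) := by
    rw [ne_eq, Sym2.eq_iff] at hne ⊢; simpa only [hf.eq_iff] using hne
  rw [image_comp, image_inter hf, image_pair, image_pair]
  exact hd _ _ _ _ hab hcd hne'

theorem ordConnected_or_ordConnected_compl_of_not_interleave {α : Type*} [LinearOrder α]
    {A : Set α} (h₁ : ¬Interleave A Aᶜ) (h₂ : ¬Interleave Aᶜ A) :
    A.OrdConnected ∨ Aᶜ.OrdConnected := by
  refine or_iff_not_imp_left.2 fun hA => ⟨fun x hx z hz y ⟨hxy, hyz⟩ hyA => ?_⟩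
  rw [ordConnected_def] at hA
  push Not at hA
  obtain ⟨a, ha, c, hc, hac⟩ := hA
  obtain ⟨m, ⟨ham, hmc⟩, hmA⟩ := not_subset.1 hac
  have hxy : x < y := lt_of_le_of_ne hxy (ne_of_mem_of_not_mem hyA hx).symm
  have hyz : y < z := lt_of_le_of_ne hyz (ne_of_mem_of_not_mem hyA hz)
  rcases lt_or_gt_of_ne (ne_of_mem_of_not_mem ha hx).symm with hxa | hax
  · exact h₂ ⟨x, hx, a, ha, m, hmA, c, hc, hxa, lt_of_le_of_ne ham (ne_of_mem_of_not_mem ha hmA),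
      lt_of_le_of_ne hmc (ne_of_mem_of_not_mem hc hmA).symm⟩
  · exact h₁ ⟨a, ha, x, hx, y, hyA, z, hz, hax, hxy, hyz⟩

theorem isArc_of_ordConnected {n : ℕ} {A : Set (Fin n)} (hA : A.OrdConnected) : IsArc A := by
  rcases A.eq_empty_or_nonempty with rfl | hne
  · exact ⟨0, 0, Nat.zero_le n, by simp⟩
  obtain ⟨l, hl, hmin⟩ := A.exists_min_image id A.toFinite hne
  obtain ⟨r, hr, hmax⟩ := A.exists_max_image id A.toFinite hne
  have hmem : ∀ x, x ∈ A ↔ l ≤ x ∧ x ≤ r :=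
    fun x => ⟨fun hx => ⟨hmin x hx, hmax x hx⟩, fun hx => hA.out hl hr hx⟩
  have hrn := r.isLt
  refine ⟨l, r + 1 - l, by omega, fun x => ?_⟩
  rw [hmem, Fin.le_def, Fin.le_def]
  constructor
  · rintro ⟨hlx, hxr⟩
    exact ⟨x - l, by omega, by rw [Nat.mod_eq_of_lt (by omega)]; omega⟩
  · rintro ⟨k, hk, hx⟩
    rw [Nat.mod_eq_of_lt (by omega)] at hx
    omega

theorem exists_lt_eq_add_mod (i : ℕ) {n x : ℕ} (hx : x < n) : ∃ r < n, x = (i + r) % n := by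
  refine ⟨(x + n * i - i) % n, Nat.mod_lt _ (by omega), ?_⟩
  have : i ≤ n * i := Nat.le_mul_of_pos_left i (by omega)
  rw [Nat.add_mod_mod, show i + (x + n * i - i) = x + n * i by omega,
    Nat.add_mul_mod_self_left, Nat.mod_eq_of_lt hx]

theorem eq_of_add_mod_eq_add_mod {i n r s : ℕ} (hr : r < n) (hs : s < n)
    (h : (i + r) % n = (i + s) % n) : r = s :=
  (Nat.ModEq.add_left_cancel' i h).eq_of_lt_of_lt hr hs

theorem IsArc.compl {n : ℕ} {A : Set (Fin n)} (hA : IsArc A) : IsArc Aᶜ := by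
  obtain ⟨i, t, ht, hA⟩ := hA
  refine ⟨i + t, n - t, Nat.sub_le n t, fun x => ?_⟩
  obtain ⟨r, hr, hx⟩ := exists_lt_eq_add_mod i x.isLt
  rw [mem_compl_iff, hA]
  constructor
  · intro hxA
    have htr : t ≤ r := not_lt.1 fun hrt => hxA ⟨r, hrt, hx⟩
    exact ⟨r - t, by omega, by rw [hx, add_assoc, Nat.add_sub_cancel' htr]⟩
  · rintro ⟨s, hs, hxs⟩ ⟨s', hs', hxs'⟩
    have := eq_of_add_mod_eq_add_mod (i := i) (show t + s < n by omega) (show s' < n by omega)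
      (by rw [← add_assoc, ← hxs, hxs'])
    omega

theorem isArc_of_not_interleave {n : ℕ} {A : Set (Fin n)} (h₁ : ¬Interleave A Aᶜ)
    (h₂ : ¬Interleave Aᶜ A) : IsArc A := by
  rcases ordConnected_or_ordConnected_compl_of_not_interleave h₁ h₂ with hA | hA
  · exact isArc_of_ordConnected hA
  · simpa using (isArc_of_ordConnected hA).compl

theorem SimpleGraph.Walk.exists_mem_support_adj_of_mem_Ioo {V : Type*} [LinearOrder V]
    {G : SimpleGraph V} {s t a c : V} (w : G.Walk a c) (hs : s ∉ w.support)
    (ht : t ∉ w.support) (ha : a ∈ Ioo s t) (hc : c ∉ Icc s t) :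
    ∃ x ∈ w.support, ∃ y, G.Adj x y ∧ x ∈ Ioo s t ∧ y ∉ Icc s t := by
  induction w with
  | nil => exact absurd (Ioo_subset_Icc_self ha) hc
  | @cons a b c hab w ih =>
    simp only [Walk.support_cons, List.mem_cons, not_or] at hs ht
    by_cases hb : b ∈ Ioo s t
    · obtain ⟨x, hx, y, hxy, hxI, hyI⟩ := ih hs.2 ht.2 hb hc
      exact ⟨x, by simp [hx], y, hxy, hxI, hyI⟩
    · refine ⟨a, by simp, b, hab, ha, fun hbI => hb ⟨?_, ?_⟩⟩
      · exact lt_of_le_of_ne hbI.1 fun h => hs.2 (h ▸ w.start_mem_support)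
      · exact lt_of_le_of_ne hbI.2 fun h => ht.2 (h ▸ w.start_mem_support)

namespace SimpleGraph.NoCrossingChords

variable {V : Type*} [LinearOrder V] {G H : SimpleGraph V}

theorem mono (hG : G.NoCrossingChords) (h : H ≤ G) : H.NoCrossingChords :=
  fun _ _ _ _ hab hbc hcd hac hbd => hG hab hbc hcd (h hac) (h hbd)

theorem not_adj_of_mem_Ioo (hG : G.NoCrossingChords) {s t x y : V} (hst : G.Adj s t)
    (hx : x ∈ Ioo s t) (hy : y ∉ Icc s t) : ¬G.Adj x y := by
  intro hxy
  rcases not_and_or.1 hy with hys | hty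
  · exact hG (not_le.1 hys) hx.1 hx.2 hxy.symm hst
  · exact hG hx.1 hx.2 (not_le.1 hty) hst hxy

theorem not_interleave (hG : G.NoCrossingChords) {u v : V} (huv : ¬G.Reachable u v) :
    ¬Interleave {w | G.Reachable u w} {w | G.Reachable v w} := by
  rintro ⟨a, ha, b, hb, c, hc, d, hd, hab, hbc, hcd⟩
  -- A walk from `b` to `d` leaves `(a, c)` along an edge `st` of `v`'s component; a walk
  -- between `a` and `c` in `u`'s component avoids `s` and `t`, so it crosses `st`.
  have hsep : ∀ {x y}, G.Reachable u x → G.Reachable v y → x ≠ y :=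
    fun hx hy hxy => huv (hx.trans (hxy ▸ hy).symm)
  obtain ⟨Q⟩ := hb.symm.trans hd
  have hQ : ∀ x ∈ Q.support, G.Reachable v x := fun x hx => hb.trans (Q.takeUntil x hx).reachable
  obtain ⟨s, hsQ, t, hst, hs, ht⟩ := Q.exists_mem_support_adj_of_mem_Ioo
    (fun h => hsep ha (hQ a h) rfl) (fun h => hsep hc (hQ c h) rfl) ⟨hab, hbc⟩
    (fun h => hcd.not_ge h.2)
  have hvs := hQ s hsQ
  have hvt := hvs.trans hst.reachable
  have havoid : ∀ {x y : V} (P : G.Walk x y), G.Reachable u x → s ∉ P.support ∧ t ∉ P.support :=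
    fun P hx => ⟨fun h => hsep (hx.trans (P.takeUntil _ h).reachable) hvs rfl,
      fun h => hsep (hx.trans (P.takeUntil _ h).reachable) hvt rfl⟩
  rcases not_and_or.1 ht with hta | hct
  · obtain ⟨P⟩ := ha.symm.trans hc
    obtain ⟨x, -, y, hxy, hx, hy⟩ := P.exists_mem_support_adj_of_mem_Ioo (havoid P ha).2
      (havoid P ha).1 ⟨not_le.1 hta, hs.1⟩ (fun h => hs.2.not_ge h.2)
    exact hG.not_adj_of_mem_Ioo hst.symm hx hy hxy
  · obtain ⟨P⟩ := hc.symm.trans ha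
    obtain ⟨x, -, y, hxy, hx, hy⟩ := P.exists_mem_support_adj_of_mem_Ioo (havoid P hc).1
      (havoid P hc).2 ⟨hs.2, not_le.1 hct⟩ (fun h => hs.1.not_ge h.1)
    exact hG.not_adj_of_mem_Ioo hst hx hy hxy

end SimpleGraph.NoCrossingChords

theorem SimpleGraph.setOf_reachable_eq_compl {V : Type*} {G : SimpleGraph V} {u v : V}
    (huv : ¬G.Reachable u v) (hcover : ∀ w, G.Reachable u w ∨ G.Reachable v w) :
    {w | G.Reachable v w} = {w | G.Reachable u w}ᶜ := by
  ext w
  exact ⟨fun hv hu => huv (hu.trans hv.symm), (hcover w).resolve_left⟩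

theorem isArc_setOf_reachable {n : ℕ} {G : SimpleGraph (Fin n)} (hG : G.NoCrossingChords)
    {u v : Fin n} (huv : ¬G.Reachable u v) (hcover : ∀ w, G.Reachable u w ∨ G.Reachable v w) :
    IsArc {w | G.Reachable u w} := by
  refine isArc_of_not_interleave ?_ ?_
  · rw [← setOf_reachable_eq_compl huv hcover]
    exact hG.not_interleave huv
  · rw [← setOf_reachable_eq_compl huv hcover]
    exact hG.not_interleave fun h => huv h.symm

theorem isArc_preimage_setOf_reachable {n : ℕ} {G : SimpleGraph (Fin n)} (π : Equiv.Perm (Fin n))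
    (hG : (G.comap π).NoCrossingChords) {u v : Fin n} (huv : ¬G.Reachable u v)
    (hcover : ∀ w, G.Reachable u w ∨ G.Reachable v w) :
    IsArc (π ⁻¹' {w | G.Reachable u w}) := by
  have hreach (a b : Fin n) : (G.comap π).Reachable a b ↔ G.Reachable (π a) (π b) :=
    (Iso.comap π G).reachable_iff.symm
  simpa [hreach] using isArc_setOf_reachable hG (u := π.symm u) (v := π.symm v)
    (by simpa [hreach] using huv) (fun w => by simpa [hreach] using hcover (π w))

namespace SimpleGraph.Preconnected

variable {V : Type*} {G : SimpleGraph V}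

theorem reachable_deleteEdges_or (hG : G.Preconnected) (x y w : V) :
    (G.deleteEdges {s(x, y)}).Reachable x w ∨ (G.deleteEdges {s(x, y)}).Reachable y w := by
  classical
  obtain ⟨P, hP⟩ := (hG w x).exists_isPath
  by_cases heP : s(x, y) ∈ P.edges
  · have hyP := P.snd_mem_support_of_mem_edges heP
    have hxP₁ := Walk.endpoint_notMem_support_takeUntil hP hyP (P.adj_of_mem_edges heP).ne
    have heP₁ : s(x, y) ∉ (P.takeUntil y hyP).edges :=
      fun h => hxP₁ ((P.takeUntil y hyP).fst_mem_support_of_mem_edges h)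
    exact .inr (.symm ⟨(P.takeUntil y hyP).toDeleteEdges {s(x, y)} (by grind)⟩)
  · exact .inl (.symm ⟨P.toDeleteEdges {s(x, y)} (by grind)⟩)

theorem exists_adj_adj_ne_of_not_adj (hG : G.Preconnected) {x y : V} (hxy : x ≠ y)
    (hadj : ¬G.Adj x y) : ∃ z w, G.Adj x z ∧ G.Adj z w ∧ w ≠ x := by
  obtain ⟨P, hP⟩ := (hG x y).exists_isPath
  cases P with
  | nil => exact absurd rfl hxy
  | cons hxz Q =>
    cases Q with
    | nil => exact absurd hxz hadj
    | cons hzw R =>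
      refine ⟨_, _, hxz, hzw, fun h => ?_⟩
      rw [Walk.cons_isPath_iff, Walk.support_cons, List.mem_cons, not_or] at hP
      exact hP.2.2 (h ▸ R.start_mem_support)

theorem exists_inner_edge_of_not_star [Nonempty V] (hG : G.Preconnected)
    (hstar : ¬∃ c, ∀ w, w ≠ c → G.Adj c w) :
    ∃ u v u' v', G.Adj u v ∧ G.Adj u u' ∧ G.Adj v v' ∧ u' ≠ v ∧ v' ≠ u := by
  -- The second vertex `x` of a path from `c` to a non-neighbour has two neighbours; a path from
  -- `x` to a non-neighbour begins with the required edge.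
  push Not at hstar
  obtain ⟨c⟩ := ‹Nonempty V›
  obtain ⟨w, hwc, hcw⟩ := hstar c
  obtain ⟨x, y, hcx, hxy, hyc⟩ := hG.exists_adj_adj_ne_of_not_adj hwc.symm hcw
  obtain ⟨w', hw'x, hxw'⟩ := hstar x
  obtain ⟨z, z', hxz, hzz', hz'x⟩ := hG.exists_adj_adj_ne_of_not_adj hw'x.symm hxw'
  by_cases hzc : z = c
  · exact ⟨x, z, y, z', hxz, hxy, hzz', hzc ▸ hyc, hz'x⟩
  · exact ⟨x, z, c, z', hxz, hcx.symm, hzz', Ne.symm hzc, hz'x⟩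

end SimpleGraph.Preconnected

theorem SimpleGraph.two_le_ncard_setOf_reachable {V : Type*} [Finite V] {G : SimpleGraph V}
    {u u' : V} (h : G.Adj u u') : 2 ≤ {w | G.Reachable u w}.ncard := by
  calc 2 = ({u, u'} : Set V).ncard := (ncard_pair h.ne).symm
    _ ≤ _ := ncard_le_ncard (by rintro _ (rfl | rfl); exacts [.refl _, h.reachable])

theorem compatible_tree_gives_interval_partition {n : ℕ} (hn : 4 ≤ n)
    (p q : Fin n → ℝ × ℝ) (hp : CCWConvex p)
    (π : Equiv.Perm (Fin n)) (hq : CCWConvex (q ∘ π))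
    (T : SimpleGraph (Fin n)) (hT : T.IsTree)
    (hstar : ¬ ∃ c : Fin n, ∀ w : Fin n, w ≠ c → T.Adj c w)
    (hdp : NoncrossingDrawing T p) (hdq : NoncrossingDrawing T q) :
    ∃ A B : Set (Fin n), A ∪ B = Set.univ ∧ Disjoint A B ∧
      2 ≤ A.ncard ∧ A.ncard ≤ B.ncard ∧ B.ncard ≤ n - 2 ∧
      IsArc A ∧ IsArc (⇑π ⁻¹' A) ∧ IsArc B ∧ IsArc (⇑π ⁻¹' B) := by
  have : Nonempty (Fin n) := ⟨⟨0, by omega⟩⟩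
  obtain ⟨u, v, u', v', huv, huu', hvv', hu'v, hv'u⟩ :=
    hT.connected.preconnected.exists_inner_edge_of_not_star hstar
  set H := T.deleteEdges {s(u, v)}
  have hHT : H ≤ T := deleteEdges_le _
  have hnr : ¬H.Reachable u v := isAcyclic_iff_forall_adj_isBridge.mp hT.isAcyclic huv
  have hcover := hT.connected.preconnected.reachable_deleteEdges_or u v
  set A := {w | H.Reachable u w}
  have hArc : IsArc A := isArc_setOf_reachable
    ((noCrossingChords_of_noncrossingDrawing hp hdp).mono hHT) hnr hcover
  have hArcπ : IsArc (π ⁻¹' A) := isArc_preimage_setOf_reachable π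
    ((noCrossingChords_of_noncrossingDrawing hq (hdq.comap π.injective)).mono
      (comap_monotone π.toEmbedding hHT)) hnr hcover
  have hA : 2 ≤ A.ncard := two_le_ncard_setOf_reachable (u' := u') (by simp [H, huu', hu'v, huv.ne])
  have hAc : 2 ≤ Aᶜ.ncard := setOf_reachable_eq_compl hnr hcover ▸
    two_le_ncard_setOf_reachable (u' := v') (by simp [H, hvv', hv'u, huv.ne'])
  have hsum : A.ncard + Aᶜ.ncard = n := by simpa using ncard_add_ncard_compl A
  rcases le_total A.ncard Aᶜ.ncard with h | h
  · exact ⟨A, Aᶜ, union_compl_self A, disjoint_compl_right, hA, h, by omega,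
      hArc, hArcπ, hArc.compl, hArcπ.compl⟩
  · exact ⟨Aᶜ, A, compl_union_self A, disjoint_compl_left, hAc, h, by omega,
      hArc.compl, hArcπ.compl, hArc, hArcπ⟩
end
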